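/- Let R be a linear order of order type ρ = ω + ζ·η + ω*, e.g., the disjoint ordered sum of ℕ, then ℤ × ℚ ordered lexicographically with the ℚ-component dominant, then the negative integers. Then the following order isomorphisms hold: (1) R × R, ordered lexicographically with the second component dominant, is order-isomorphic to R (ρ·ρ = ρ); (2) the ordered sum R + R is order-isomorphic to R (ρ + ρ = ρ); (3) for every n ≥ 1, the ordered sum of n copies of R is order-isomorphic to R (n·ρ = ρ); (4) both R + 1 and 1 + R (adjoining a greatest, respectively least, element) are order-isomorphic to R. -/

import Mathlib

set_option autoImplicit false

instance instCountableLex {α : Type*} [Countable α] : Countable (Lex α) :=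
  inferInstanceAs (Countable α)

namespace EFGames

/-! ### Syntax of first-order logic over words.
Letters of the alphabet `Λ` and first-order variables are represented by natural numbers. -/

inductive FOForm : Type where
  | top | bot | empt
  | eq (x y : ℕ) | lab (x a : ℕ)
  | lt (x y : ℕ) | le (x y : ℕ) | suc (x y : ℕ)
  | fmin (x : ℕ) | fmax (x : ℕ)
  | not (φ : FOForm) | or (φ ψ : FOForm) | and (φ ψ : FOForm)
  | ex (x : ℕ) (φ : FOForm) | all (x : ℕ) (φ : FOForm)

/-- Free variables of a formula. -/
def FOForm.FV : FOForm → Finset ℕ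
  | .top | .bot | .empt => ∅
  | .eq x y | .lt x y | .le x y | .suc x y => {x, y}
  | .lab x _ | .fmin x | .fmax x => {x}
  | .not φ => φ.FV
  | .or φ ψ | .and φ ψ => φ.FV ∪ ψ.FV
  | .ex x φ | .all x φ => φ.FV.erase x

/-- Quantifier depth. -/
def FOForm.qd : FOForm → ℕ
  | .not φ => φ.qd
  | .or φ ψ | .and φ ψ => max φ.qd ψ.qd
  | .ex _ φ | .all _ φ => φ.qd + 1
  | _ => 0

/-- All variables occurring in a formula (free or bound). -/
def FOForm.vars : FOForm → Finset ℕ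
  | .top | .bot | .empt => ∅
  | .eq x y | .lt x y | .le x y | .suc x y => {x, y}
  | .lab x _ | .fmin x | .fmax x => {x}
  | .not φ => φ.vars
  | .or φ ψ | .and φ ψ => φ.vars ∪ ψ.vars
  | .ex x φ | .all x φ => insert x φ.vars

/-- The formula contains none of the predicates `suc`, `min`, `max`, `empty`. -/
def FOForm.NoSMME : FOForm → Prop
  | .empt | .suc _ _ | .fmin _ | .fmax _ => False
  | .not φ => φ.NoSMME
  | .or φ ψ | .and φ ψ => φ.NoSMME ∧ ψ.NoSMME
  | .ex _ φ | .all _ φ => φ.NoSMME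
  | _ => True

/-- The formula contains the predicate `≤` or `<`. -/
def FOForm.HasOrder : FOForm → Prop
  | .lt _ _ | .le _ _ => True
  | .not φ => φ.HasOrder
  | .or φ ψ | .and φ ψ => φ.HasOrder ∨ ψ.HasOrder
  | .ex _ φ | .all _ φ => φ.HasOrder
  | _ => False

/-- The formula contains one of the predicates `suc`, `min`, `max`, `empty`. -/
def FOForm.HasSMME : FOForm → Prop
  | .empt | .suc _ _ | .fmin _ | .fmax _ => True
  | .not φ => φ.HasSMME
  | .or φ ψ | .and φ ψ => φ.HasSMME ∨ ψ.HasSMME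
  | .ex _ φ | .all _ φ => φ.HasSMME
  | _ => False

def FOForm.IsAtomic : FOForm → Prop
  | .top | .bot | .empt | .eq _ _ | .lab _ _ | .lt _ _ | .le _ _
  | .suc _ _ | .fmin _ | .fmax _ => True
  | _ => False

/-- A literal is an atomic formula or a negated atomic formula. -/
def FOForm.IsLiteral (φ : FOForm) : Prop :=
  φ.IsAtomic ∨ ∃ ψ : FOForm, ψ.IsAtomic ∧ φ = .not ψ

/-- A sentence is a formula without free variables. -/
def FOForm.IsSentence (φ : FOForm) : Prop := φ.FV = ∅

/-- Contexts: formulas with exactly one occurrence of a placeholder `∘`. -/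
inductive FOCtx : Type where
  | hole
  | notC (μ : FOCtx)
  | orL (μ : FOCtx) (ψ : FOForm)
  | orR (φ : FOForm) (μ : FOCtx)
  | andL (μ : FOCtx) (ψ : FOForm)
  | andR (φ : FOForm) (μ : FOCtx)
  | exC (x : ℕ) (μ : FOCtx)
  | allC (x : ℕ) (μ : FOCtx)

/-- Substituting a formula for the placeholder of a context. -/
def FOCtx.subst : FOCtx → FOForm → FOForm
  | .hole, φ => φ
  | .notC μ, φ => .not (μ.subst φ)
  | .orL μ ψ, φ => .or (μ.subst φ) ψ
  | .orR χ μ, φ => .or χ (μ.subst φ)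
  | .andL μ ψ, φ => .and (μ.subst φ) ψ
  | .andR χ μ, φ => .and χ (μ.subst φ)
  | .exC x μ, φ => .ex x (μ.subst φ)
  | .allC x μ, φ => .all x (μ.subst φ)

/-- A fragment: a nonempty set of formulas satisfying the syntactic closure properties. -/
structure IsFragment (F : Set FOForm) : Prop where
  nonempty : F.Nonempty
  top_mem : ∀ (μ : FOCtx) (φ : FOForm), μ.subst φ ∈ F → μ.subst .top ∈ F
  bot_mem : ∀ (μ : FOCtx) (φ : FOForm), μ.subst φ ∈ F → μ.subst .bot ∈ F
  lab_mem : ∀ (μ : FOCtx) (φ : FOForm) (x a : ℕ), μ.subst φ ∈ F → μ.subst (.lab x a) ∈ F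
  or_mem : ∀ (μ : FOCtx) (φ ψ : FOForm),
    μ.subst (.or φ ψ) ∈ F ↔ μ.subst φ ∈ F ∧ μ.subst ψ ∈ F
  and_mem : ∀ (μ : FOCtx) (φ ψ : FOForm),
    μ.subst (.and φ ψ) ∈ F ↔ μ.subst φ ∈ F ∧ μ.subst ψ ∈ F
  negneg : ∀ (μ : FOCtx) (φ : FOForm), μ.subst (.not (.not φ)) ∈ F → μ.subst φ ∈ F
  ex_drop : ∀ (μ : FOCtx) (φ : FOForm) (x : ℕ),
    μ.subst (.ex x φ) ∈ F → x ∉ φ.FV → μ.subst φ ∈ F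
  all_drop : ∀ (μ : FOCtx) (φ : FOForm) (x : ℕ),
    μ.subst (.all x φ) ∈ F → x ∉ φ.FV → μ.subst φ ∈ F

/-- A fragment is order-stable if `μ(x<y) ∈ F ↔ μ(x≤y) ∈ F`. -/
def OrderStable (F : Set FOForm) : Prop :=
  ∀ (μ : FOCtx) (x y : ℕ), μ.subst (.lt x y) ∈ F ↔ μ.subst (.le x y) ∈ F

/-- A fragment is suc-stable if it satisfies the two closure conditions for `suc`, `min`, `max`, `empty`. -/
def SucStable (F : Set FOForm) : Prop :=
  (∀ (μ : FOCtx) (x y : ℕ), μ.subst (.suc x y) ∈ F →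
      μ.subst (.eq x y) ∈ F ∧ μ.subst (.fmax x) ∈ F ∧ μ.subst (.fmin y) ∈ F) ∧
  (∀ (μ : FOCtx) (x : ℕ), (μ.subst (.fmin x) ∈ F ∨ μ.subst (.fmax x) ∈ F) →
      μ.subst .empt ∈ F)

/-- The fragment has quantifier depth bounded by `n`. -/
def QDBoundedBy (F : Set FOForm) (n : ℕ) : Prop := ∀ φ ∈ F, φ.qd ≤ n

/-- Quantifiers, including the negated quantifiers. -/
inductive Quant : Type | qex | qall | qnex | qnall

def Quant.apply : Quant → ℕ → FOForm → FOForm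
  | .qex, x, φ => .ex x φ
  | .qall, x, φ => .all x φ
  | .qnex, x, φ => .not (.ex x φ)
  | .qnall, x, φ => .not (.all x φ)

/-- The reduct `Qx⁻¹F` of a set of formulas. -/
def reduct (Q : Quant) (x : ℕ) (F : Set FOForm) : Set FOForm := {φ | Q.apply x φ ∈ F}
/-! ### Generalized words -/

/-- A (countable) generalized word over the alphabet `ℕ`: a countable linear order
labeled by letters. Words are compared up to label-preserving order isomorphism
(`GWord.Iso`). -/
structure GWord : Type 1 where
  carrier : Type
  ord : LinearOrder carrier
  cnt : Countable carrier
  label : carrier → ℕ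

attribute [instance] GWord.ord GWord.cnt

/-- Label-preserving order isomorphism of generalized words. -/
def GWord.Iso (u v : GWord) : Prop :=
  ∃ f : u.carrier ≃o v.carrier, ∀ p : u.carrier, v.label (f p) = u.label p

/-- Satisfaction of a formula in a word under a (partial) valuation of the variables. -/
def GWord.Sat (u : GWord) : (ℕ → Option u.carrier) → FOForm → Prop
  | _, .top => True
  | _, .bot => False
  | _, .empt => IsEmpty u.carrier
  | α, .eq x y => ∃ p q : u.carrier, α x = some p ∧ α y = some q ∧ p = q
  | α, .lab x a => ∃ p : u.carrier, α x = some p ∧ u.label p = a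
  | α, .lt x y => ∃ p q : u.carrier, α x = some p ∧ α y = some q ∧ p < q
  | α, .le x y => ∃ p q : u.carrier, α x = some p ∧ α y = some q ∧ p ≤ q
  | α, .suc x y => ∃ p q : u.carrier, α x = some p ∧ α y = some q ∧ p < q ∧
      ∀ r : u.carrier, ¬ (p < r ∧ r < q)
  | α, .fmin x => ∃ p : u.carrier, α x = some p ∧ ∀ q : u.carrier, p ≤ q
  | α, .fmax x => ∃ p : u.carrier, α x = some p ∧ ∀ q : u.carrier, q ≤ p
  | α, .not φ => ¬ u.Sat α φ
  | α, .or φ ψ => u.Sat α φ ∨ u.Sat α ψ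
  | α, .and φ ψ => u.Sat α φ ∧ u.Sat α ψ
  | α, .ex x φ => ∃ p : u.carrier, u.Sat (fun y => if y = x then some p else α y) φ
  | α, .all x φ => ∀ p : u.carrier, u.Sat (fun y => if y = x then some p else α y) φ

/-- The empty valuation. -/
def emptyVal (u : GWord) : ℕ → Option u.carrier := fun _ => none

/-- A word satisfies a sentence. -/
def SatS (u : GWord) (φ : FOForm) : Prop := u.Sat (emptyVal u) φ

/-- Updating a valuation at a variable. -/
def updVal {u : GWord} (α : ℕ → Option u.carrier) (x : ℕ) (p : u.carrier) :
    ℕ → Option u.carrier :=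
  fun y => if y = x then some p else α y

/-- The domain of the valuation `α` is exactly the finite set `V`. -/
def ValDom {u : GWord} (α : ℕ → Option u.carrier) (V : Finset ℕ) : Prop :=
  ∀ x : ℕ, (α x).isSome ↔ x ∈ V

/-- A finite word, regarded as a generalized word. -/
def listToGWord (w : List ℕ) : GWord :=
  ⟨Fin w.length, inferInstance, inferInstance, w.get⟩

/-- Concatenation of generalized words. -/
def GWord.concat (u v : GWord) : GWord :=
  ⟨u.carrier ⊕ₗ v.carrier, inferInstance, inferInstance,
    fun p => Sum.elim u.label v.label (ofLex p)⟩

/-- The `τ`-power of a word, where `τ` is the order type of the countable linear order `T`: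
positions are pairs `(t, p)` ordered with the `T`-component dominant. -/
def GWord.pow (u : GWord) (T : Type) [LinearOrder T] [Countable T] : GWord :=
  ⟨T ×ₗ u.carrier, inferInstance, inferInstance, fun p => u.label (ofLex p).2⟩

/-- An index type of order type `ρ = ω + ζ·η + ω*`: a copy of `ℕ`, followed by `ℤ × ℚ`
ordered lexicographically with the `ℚ`-component dominant, followed by the negative
integers (the order dual of `ℕ`). -/
abbrev Rho : Type := (ℕ ⊕ₗ (ℚ ×ₗ ℤ)) ⊕ₗ ℕᵒᵈ

/-- ρ-rational words: built from finite words by concatenation and ρ-power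
(closed under isomorphism, since words are identified up to isomorphism). -/
inductive RhoRational : GWord → Prop where
  | fin (w : List ℕ) : RhoRational (listToGWord w)
  | concat {u v : GWord} : RhoRational u → RhoRational v → RhoRational (u.concat v)
  | rpow {u : GWord} : RhoRational u → RhoRational (u.pow Rho)
  | iso {u v : GWord} : RhoRational u → GWord.Iso u v → RhoRational v
/-! ### The `F`-game -/

/-- A configuration of the `F`-game: a set of formulas (an iterated reduct of the
original fragment) together with two valuations on two words. -/
structure Config : Type 1 where
  frag : Set FOForm
  w1 : GWord
  w2 : GWord
  val1 : ℕ → Option w1.carrier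
  val2 : ℕ → Option w2.carrier

/-- Spoiler's winning condition: the configuration contains a literal with free variables
inside the valuation domain, satisfied in the first valuation but not in the second. -/
def SpoilerWinsNow (C : Config) : Prop :=
  ∃ φ ∈ C.frag, φ.IsLiteral ∧ (∀ y ∈ φ.FV, (C.val1 y).isSome) ∧
    C.w1.Sat C.val1 φ ∧ ¬ C.w2.Sat C.val2 φ

/-- A set of configurations is a (Duplicator-)safe invariant: no configuration in it is
immediately winning for Spoiler, and for every move of Spoiler (a quantifier `Q`, a
variable `x` with nonempty reduct, and a quest `q` in the appropriate word) Duplicator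
has a reply `r` leading back into the set (the valuations are swapped for negated
quantifiers). -/
def SafeInv (Good : Set Config) : Prop :=
  ∀ D ∈ Good,
    (¬ SpoilerWinsNow D) ∧
    (∀ x : ℕ, (reduct .qex x D.frag).Nonempty →
      ∀ q : D.w1.carrier, ∃ r : D.w2.carrier,
        (⟨reduct .qex x D.frag, D.w1, D.w2, updVal D.val1 x q, updVal D.val2 x r⟩ : Config) ∈ Good) ∧
    (∀ x : ℕ, (reduct .qall x D.frag).Nonempty →
      ∀ q : D.w2.carrier, ∃ r : D.w1.carrier,
        (⟨reduct .qall x D.frag, D.w1, D.w2, updVal D.val1 x r, updVal D.val2 x q⟩ : Config) ∈ Good) ∧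
    (∀ x : ℕ, (reduct .qnex x D.frag).Nonempty →
      ∀ q : D.w2.carrier, ∃ r : D.w1.carrier,
        (⟨reduct .qnex x D.frag, D.w2, D.w1, updVal D.val2 x q, updVal D.val1 x r⟩ : Config) ∈ Good) ∧
    (∀ x : ℕ, (reduct .qnall x D.frag).Nonempty →
      ∀ q : D.w1.carrier, ∃ r : D.w2.carrier,
        (⟨reduct .qnall x D.frag, D.w2, D.w1, updVal D.val2 x r, updVal D.val1 x q⟩ : Config) ∈ Good)

/-- Duplicator has a winning strategy from a configuration of this (possibly infinite)
safety game iff some safe invariant contains the configuration. -/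
def DuplicatorWins (C : Config) : Prop :=
  ∃ Good : Set Config, C ∈ Good ∧ SafeInv Good

/-- Duplicator has a winning strategy in the `F`-game on `(u, v)` (from the initial
configuration with empty valuations). -/
def DuplicatorWinsGame (F : Set FOForm) (u v : GWord) : Prop :=
  DuplicatorWins ⟨F, u, v, fun _ => none, fun _ => none⟩

/-- Spoiler has a winning strategy: either the current configuration is already winning
for Spoiler, or Spoiler has a move such that every reply of Duplicator (in particular,
no possible reply) leads to a configuration where Spoiler wins. -/
inductive SpoilerWins : Config → Prop where
  | now {C : Config} : SpoilerWinsNow C → SpoilerWins C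
  | mex {C : Config} (x : ℕ) (h : (reduct .qex x C.frag).Nonempty) (q : C.w1.carrier)
      (h2 : ∀ r : C.w2.carrier, SpoilerWins
        ⟨reduct .qex x C.frag, C.w1, C.w2, updVal C.val1 x q, updVal C.val2 x r⟩) :
      SpoilerWins C

/-! ### π-terms and their interpretations -/

/-- π-terms over the alphabet `ℕ` (elements of the free π-algebra). -/
inductive PiTerm : Type where
  | letter (a : ℕ)
  | mul (s t : PiTerm)
  | pi (s : PiTerm)

/-- The interpretation `⟦·⟧_ρ` of π-terms as generalized words: letters become
single-position words, products concatenations, and the π-power the ρ-power. -/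
def PiTerm.evalRho : PiTerm → GWord
  | .letter a => listToGWord [a]
  | .mul s t => s.evalRho.concat t.evalRho
  | .pi s => s.evalRho.pow Rho

/-- The interpretation `⟦·⟧_m` of π-terms as finite words: the π-power becomes
the `m`-fold concatenation power. -/
def PiTerm.evalFin (m : ℕ) : PiTerm → GWord
  | .letter a => listToGWord [a]
  | .mul s t => (s.evalFin m).concat (t.evalFin m)
  | .pi s => (s.evalFin m).pow (Fin m)

/-- `mpow u k = u^(k+1)`: positive powers in any semigroup (or magma). -/
def mpow {M : Type} [Mul M] (u : M) : ℕ → M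
  | 0 => u
  | k+1 => mpow u k * u

/-- `k+1` is an idempotency exponent of `M`: `u^(k+1)` is idempotent for every `u`. -/
def IsIdemExpnt (M : Type) [Mul M] (k : ℕ) : Prop :=
  ∀ u : M, mpow u k * mpow u k = mpow u k

/-- Evaluation of a π-term in `M` under a letter assignment `h`, interpreting the
π-power as the `(k+1)`-st power. -/
def PiTerm.evalMul {M : Type} [Mul M] (h : ℕ → M) (k : ℕ) : PiTerm → M
  | .letter a => h a
  | .mul s t => (s.evalMul h k) * (t.evalMul h k)
  | .pi s => mpow (s.evalMul h k) k

/-- The identity `s = t` of π-terms holds in `M`: for every assignment of the letters and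
every idempotency exponent (i.e. interpreting `(·)^π` as the idempotent power), the two
terms evaluate equally. -/
def PiIdentityHolds (M : Type) [Mul M] (s t : PiTerm) : Prop :=
  ∀ (h : ℕ → M) (k : ℕ), IsIdemExpnt M k → s.evalMul h k = t.evalMul h k

/-! ### Languages, definability and syntactic monoids/semigroups -/

/-- All letters of the finite word `w` belong to the alphabet `A`. -/
def InAlph (A : Finset ℕ) (w : FreeMonoid ℕ) : Prop :=
  ∀ a ∈ FreeMonoid.toList w, a ∈ A

/-- A finite word, regarded as a generalized word. -/
def wordToGWord (w : FreeMonoid ℕ) : GWord := listToGWord (FreeMonoid.toList w)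

/-- The submonoid `A* ⊆ Λ*` of words over the finite alphabet `A`. -/
def wordsOver (A : Finset ℕ) : Submonoid (FreeMonoid ℕ) where
  carrier := {w | InAlph A w}
  mul_mem' := by
    intro u v hu hv a ha
    rw [FreeMonoid.toList_mul] at ha
    rcases List.mem_append.mp ha with h | h
    exacts [hu a h, hv a h]
  one_mem' := by
    intro a ha
    simp [FreeMonoid.toList_one] at ha

/-- The single-letter word `a ∈ A*`. -/
def letterWord (A : Finset ℕ) (a : ℕ) (ha : a ∈ A) : ↥(wordsOver A) :=
  ⟨FreeMonoid.of a, by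
    intro b hb
    rw [FreeMonoid.toList_of] at hb
    rcases List.mem_singleton.mp hb with rfl
    exact ha⟩

/-- The language over `A` defined by the sentence `φ`. -/
def LangOf (A : Finset ℕ) (φ : FOForm) : Set (FreeMonoid ℕ) :=
  {w | InAlph A w ∧ SatS (wordToGWord w) φ}

/-- `L ⊆ A*` is definable in `F` over the alphabet `A`. -/
def DefinableIn (F : Set FOForm) (A : Finset ℕ) (L : Set (FreeMonoid ℕ)) : Prop :=
  ∃ φ ∈ F, φ.IsSentence ∧ L = LangOf A φ

/-- The syntactic congruence of `L` on `A*`: `u ≡_L v` iff `xuy ∈ L ⇔ xvy ∈ L` for all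
contexts `x, y ∈ A*`. -/
def synCon (A : Finset ℕ) (L : Set (FreeMonoid ℕ)) : Con ↥(wordsOver A) where
  r u v := ∀ x y : FreeMonoid ℕ, InAlph A x → InAlph A y →
    ((x * ↑u * y ∈ L) ↔ (x * ↑v * y ∈ L))
  iseqv := ⟨fun _ _ _ _ _ => Iff.rfl,
    fun h x y hx hy => (h x y hx hy).symm,
    fun h1 h2 x y hx hy => (h1 x y hx hy).trans (h2 x y hx hy)⟩
  mul' := by
    intro w x y z h1 h2 a b ha hb
    have hyb : InAlph A ((y : FreeMonoid ℕ) * b) := by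
      intro c hc
      rw [FreeMonoid.toList_mul] at hc
      rcases List.mem_append.mp hc with h | h
      exacts [y.2 c h, hb c h]
    have hax : InAlph A (a * (x : FreeMonoid ℕ)) := by
      intro c hc
      rw [FreeMonoid.toList_mul] at hc
      rcases List.mem_append.mp hc with h | h
      exacts [ha c h, x.2 c h]
    have e1 : a * ↑(w * y) * b = a * (w : FreeMonoid ℕ) * (↑y * b) := by
      push_cast; simp [mul_assoc]
    have e2 : a * (x : FreeMonoid ℕ) * (↑y * b) = (a * ↑x) * ↑y * b := by
      simp [mul_assoc]
    have e3 : (a * (x : FreeMonoid ℕ)) * ↑z * b = a * ↑(x * z) * b := by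
      push_cast; simp [mul_assoc]
    rw [e1, h1 a (↑y * b) ha hyb, e2, h2 (a * ↑x) b hax hb, e3]

/-- The syntactic monoid `M_L = A*/≡_L`. -/
def SynMonoid (A : Finset ℕ) (L : Set (FreeMonoid ℕ)) : Type := (synCon A L).Quotient

instance (A : Finset ℕ) (L : Set (FreeMonoid ℕ)) : Monoid (SynMonoid A L) :=
  inferInstanceAs (Monoid (synCon A L).Quotient)

/-- The subsemigroup `A⁺ ⊆ Λ*` of nonempty words over the finite alphabet `A`. -/
def plusWordsOver (A : Finset ℕ) : Subsemigroup (FreeMonoid ℕ) where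
  carrier := {w | w ≠ 1 ∧ InAlph A w}
  mul_mem' := by
    intro u v hu hv
    refine ⟨?_, ?_⟩
    · intro h
      apply hu.1
      have : FreeMonoid.toList (u * v) = FreeMonoid.toList (1 : FreeMonoid ℕ) := by rw [h]
      rw [FreeMonoid.toList_mul, FreeMonoid.toList_one] at this
      exact (List.append_eq_nil_iff.mp this).1
    · intro a ha
      rw [FreeMonoid.toList_mul] at ha
      rcases List.mem_append.mp ha with h | h
      exacts [hu.2 a h, hv.2 a h]

/-- The syntactic congruence of `L ⊆ A⁺` on `A⁺` (contexts range over `A*`). -/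
def synConS (A : Finset ℕ) (L : Set (FreeMonoid ℕ)) : Con ↥(plusWordsOver A) where
  r u v := ∀ x y : FreeMonoid ℕ, InAlph A x → InAlph A y →
    ((x * ↑u * y ∈ L) ↔ (x * ↑v * y ∈ L))
  iseqv := ⟨fun _ _ _ _ _ => Iff.rfl,
    fun h x y hx hy => (h x y hx hy).symm,
    fun h1 h2 x y hx hy => (h1 x y hx hy).trans (h2 x y hx hy)⟩
  mul' := by
    intro w x y z h1 h2 a b ha hb
    have hyb : InAlph A ((y : FreeMonoid ℕ) * b) := by
      intro c hc
      rw [FreeMonoid.toList_mul] at hc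
      rcases List.mem_append.mp hc with h | h
      exacts [y.2.2 c h, hb c h]
    have hax : InAlph A (a * (x : FreeMonoid ℕ)) := by
      intro c hc
      rw [FreeMonoid.toList_mul] at hc
      rcases List.mem_append.mp hc with h | h
      exacts [ha c h, x.2.2 c h]
    have e1 : a * ↑(w * y) * b = a * (w : FreeMonoid ℕ) * (↑y * b) := by
      push_cast; simp [mul_assoc]
    have e2 : a * (x : FreeMonoid ℕ) * (↑y * b) = (a * ↑x) * ↑y * b := by
      simp [mul_assoc]
    have e3 : (a * (x : FreeMonoid ℕ)) * ↑z * b = a * ↑(x * z) * b := by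
      push_cast; simp [mul_assoc]
    rw [e1, h1 a (↑y * b) ha hyb, e2, h2 (a * ↑x) b hax hb, e3]

/-- The syntactic semigroup of `L ⊆ A⁺`. -/
def SynSemigroup (A : Finset ℕ) (L : Set (FreeMonoid ℕ)) : Type := (synConS A L).Quotient

instance (A : Finset ℕ) (L : Set (FreeMonoid ℕ)) : Semigroup (SynSemigroup A L) :=
  inferInstanceAs (Semigroup (synConS A L).Quotient)

/-- The language of nonempty words over `A` defined by the sentence `φ`. -/
def LangOfPlus (A : Finset ℕ) (φ : FOForm) : Set (FreeMonoid ℕ) :=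
  {w | w ≠ 1 ∧ InAlph A w ∧ SatS (wordToGWord w) φ}

/-- `L ⊆ A⁺` is definable in `F` over the alphabet `A`, over nonempty words. -/
def DefinablePlusIn (F : Set FOForm) (A : Finset ℕ) (L : Set (FreeMonoid ℕ)) : Prop :=
  ∃ φ ∈ F, φ.IsSentence ∧ L = LangOfPlus A φ

/-! ### Concatenation of finite families and unions of valuations -/

/-- Concatenation of a finite family of words `u 0, u 1, …, u (k-1)` (in this order). -/
def GWord.concatFam {k : ℕ} (u : Fin k → GWord) : GWord :=
  ⟨Σₗ i : Fin k, (u i).carrier, inferInstance,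
    inferInstanceAs (Countable (Lex (Σ i : Fin k, (u i).carrier))),
    fun p => (u (ofLex p).1).label (ofLex p).2⟩

/-- The union of a family of valuations with (mutually disjoint) domains, as a valuation
on the concatenation. -/
def combineVal {k : ℕ} (u : Fin k → GWord) (α : ∀ i : Fin k, ℕ → Option (u i).carrier)
    (x : ℕ) : Option (GWord.concatFam u).carrier :=
  (List.finRange k).findSome? fun i => ((α i x).map fun p => toLex ⟨i, p⟩)

end EFGames

/-!
Write `ζη` for `ℚ ×ₗ ℤ`. By Cantor's theorem `T ×ₗ ℤ ≃o ζη` for every countable dense `T`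
without endpoints, so `ζη` absorbs neighbours: `ζη + ζη`, `ζη + ζ + ζη`, `(ζη + ζ)·ι` for `ι`
without maximum and `(ζ + ζη)·ι` for `ι` without minimum are all `ζη`, since `η + η`,
`η + 1 + η`, `(η + 1)·ι` and `(1 + η)·ι` are countable dense orders without endpoints.
In a sum of copies of `ρ` indexed by `ω`, `ζ` or `ω*`, the final `ω*` of each copy merges with
the initial `ω` of the next into a `ζ`, which gives `ρ·ω = ω + ζη`, `ρ·ζ = ζη` and
`ρ·ω* = ζη + ω*`; then `ρ·ζη = (ρ·ζ)·η = ζη`, and `ρ·ρ = ω + ζη + ζη + ζη + ω* = ρ`.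
Likewise `ρ + ρ = ω + ζη + ζ + ζη + ω* = ρ`, whence `ρ·n = ρ`, and `ρ + 1 = ρ = 1 + ρ`
because `ω* + 1 = ω*` and `1 + ω = ω`.
-/

open Sum OrderDual Prod.Lex

namespace OrderIso

variable {α β : Type*} [LinearOrder α] [LinearOrder β]

noncomputable def natProdLexSumLexRotate : ℕ ×ₗ (α ⊕ₗ β) ≃o α ⊕ₗ ℕ ×ₗ (β ⊕ₗ α) := by
  refine StrictMono.orderIsoOfSurjective
    (fun x => match ofLex (ofLex x).2, (ofLex x).1 with
      | inl a, 0 => toLex (inl a)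
      | inl a, n + 1 => toLex (inr (toLex (n, toLex (inr a))))
      | inr b, n => toLex (inr (toLex (n, toLex (inl b))))) ?_ ?_
  · simp only [StrictMono, Lex.forall, Prod.forall]
    rintro (_ | n) (a | b) (_ | m) (a' | b') h <;> simp_all [toLex_lt_toLex] <;> omega
  · simp only [Function.Surjective, Lex.forall, Lex.exists, Prod.exists]
    rintro (a | ⟨n, b | a⟩)
    exacts [⟨0, inl a, rfl⟩, ⟨n, inr b, rfl⟩, ⟨n + 1, inl a, rfl⟩]

noncomputable def intProdLexSumLexRotate : ℤ ×ₗ (α ⊕ₗ β) ≃o ℤ ×ₗ (β ⊕ₗ α) := by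
  refine StrictMono.orderIsoOfSurjective
    (fun x => match ofLex (ofLex x).2 with
      | inl a => toLex ((ofLex x).1, toLex (inr a))
      | inr b => toLex ((ofLex x).1 + 1, toLex (inl b))) ?_ ?_
  · simp only [StrictMono, Lex.forall, Prod.forall]
    rintro n (a | b) m (a' | b') h <;> simp_all [toLex_lt_toLex] <;> omega
  · simp only [Function.Surjective, Lex.forall, Lex.exists, Prod.exists, Prod.forall]
    rintro n (b | a)
    exacts [⟨n - 1, inr b, by simp⟩, ⟨n, inl a, rfl⟩]

noncomputable def natDualProdLexSumLexRotate :
    ℕᵒᵈ ×ₗ (α ⊕ₗ β) ≃o ℕᵒᵈ ×ₗ (β ⊕ₗ α) ⊕ₗ β := by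
  refine StrictMono.orderIsoOfSurjective
    (fun x => match ofLex (ofLex x).2, ofDual (ofLex x).1 with
      | inl a, n => toLex (inl (toLex (toDual n, toLex (inr a))))
      | inr b, 0 => toLex (inr b)
      | inr b, n + 1 => toLex (inl (toLex (toDual n, toLex (inl b))))) ?_ ?_
  · simp only [StrictMono, Lex.forall, Prod.forall, OrderDual.forall]
    rintro (_ | n) (a | b) (_ | m) (a' | b') h <;>
      simp_all [toLex_lt_toLex, -toDual_add, -toDual_zero] <;> omega
  · simp only [Function.Surjective, Lex.forall, Lex.exists, Prod.exists, OrderDual.exists]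
    rintro (⟨n, b | a⟩ | b)
    exacts [⟨ofDual n + 1, inr b, rfl⟩, ⟨ofDual n, inl a, rfl⟩, ⟨0, inr b, rfl⟩]

noncomputable def natDualSumLexNat : ℕᵒᵈ ⊕ₗ ℕ ≃o ℤ := by
  refine StrictMono.orderIsoOfSurjective
    (fun x => match ofLex x with
      | inl n => -1 - ((ofDual n : ℕ) : ℤ)
      | inr n => (n : ℤ)) ?_ ?_
  · simp only [StrictMono, Lex.forall]
    rintro (n | n) (m | m) h <;> simp at h ⊢ <;> omega
  · intro z
    rcases le_or_gt 0 z with hz | hz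
    · exact ⟨toLex (inr z.toNat), by simp [hz]⟩
    · exact ⟨toLex (inl (toDual (-z - 1).toNat)), by simp; omega⟩

noncomputable def punitSumLexNat : PUnit ⊕ₗ ℕ ≃o ℕ := by
  refine StrictMono.orderIsoOfSurjective
    (fun x => match ofLex x with
      | inl _ => 0
      | inr n => n + 1) ?_ ?_
  · simp only [StrictMono, Lex.forall]
    rintro (_ | n) (_ | m) h <;> simp_all
  · rintro (_ | n)
    exacts [⟨toLex (inl .unit), rfl⟩, ⟨toLex (inr n), rfl⟩]

noncomputable def natDualSumLexPUnit : ℕᵒᵈ ⊕ₗ PUnit ≃o ℕᵒᵈ :=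
  (sumLexCongr (.refl _) (.ofUnique _ PUnit.{1}ᵒᵈ)).trans <|
    (sumLexDualAntidistrib PUnit ℕ).symm.trans punitSumLexNat.dual

noncomputable def punitSumLexFin (n : ℕ) : PUnit ⊕ₗ Fin n ≃o Fin (n + 1) := by
  refine StrictMono.orderIsoOfSurjective
    (fun x => match ofLex x with
      | inl _ => 0
      | inr i => i.succ) ?_ ?_
  · simp only [StrictMono, Lex.forall]
    rintro (_ | i) (_ | j) h <;> simp_all [Fin.succ_pos]
  · intro i
    rcases Fin.eq_zero_or_eq_succ i with rfl | ⟨j, rfl⟩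
    exacts [⟨toLex (inl .unit), rfl⟩, ⟨toLex (inr j), rfl⟩]

noncomputable def sumLexPUnitProdLex : (α ⊕ₗ PUnit) ×ₗ β ≃o α ×ₗ β ⊕ₗ β :=
  (sumLexProdLexDistrib _ _ _).trans (sumLexCongr (.refl _) (uniqueProd _ _))

noncomputable def punitSumLexProdLex : (PUnit ⊕ₗ α) ×ₗ β ≃o β ⊕ₗ α ×ₗ β :=
  (sumLexProdLexDistrib _ _ _).trans (sumLexCongr (uniqueProd _ _) (.refl _))

noncomputable def finSuccProdLexOfSumLexSelf (e : α ⊕ₗ α ≃o α) :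
    (n : ℕ) → Fin (n + 1) ×ₗ α ≃o α
  | 0 => uniqueProd (Fin 1) α
  | n + 1 => (prodLexCongr (punitSumLexFin.{0} (n + 1)).symm (.refl α)).trans <|
      punitSumLexProdLex.trans <|
        (sumLexCongr (.refl α) (finSuccProdLexOfSumLexSelf e n)).trans e

section ZetaEta

variable (T ι : Type*) [LinearOrder T] [Countable T] [DenselyOrdered T] [NoMinOrder T]
  [NoMaxOrder T] [Nonempty T] [LinearOrder ι] [Countable ι] [Nonempty ι]

noncomputable def prodLexIntOfCountableDense : T ×ₗ ℤ ≃o ℚ ×ₗ ℤ :=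
  prodLexCongr (Classical.choice (Order.iso_of_countable_dense T ℚ)) (.refl ℤ)

noncomputable def prodLexRatProdLexInt : T ×ₗ (ℚ ×ₗ ℤ) ≃o ℚ ×ₗ ℤ :=
  (prodLexAssoc T ℚ ℤ).symm.trans (prodLexIntOfCountableDense _)

noncomputable def prodLexSumLexIntOfNoMaxOrder [NoMaxOrder ι] :
    ι ×ₗ (ℚ ×ₗ ℤ ⊕ₗ ℤ) ≃o ℚ ×ₗ ℤ :=
  (prodLexCongr (.refl ι) sumLexPUnitProdLex.{0, 0, 0}.symm).trans <|
    (prodLexAssoc _ _ _).symm.trans (prodLexIntOfCountableDense _)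

noncomputable def prodLexIntSumLexOfNoMinOrder [NoMinOrder ι] :
    ι ×ₗ (ℤ ⊕ₗ ℚ ×ₗ ℤ) ≃o ℚ ×ₗ ℤ :=
  (prodLexCongr (.refl ι) punitSumLexProdLex.{0, 0, 0}.symm).trans <|
    (prodLexAssoc _ _ _).symm.trans (prodLexIntOfCountableDense _)

noncomputable def ratProdLexIntSumLexSelf : ℚ ×ₗ ℤ ⊕ₗ ℚ ×ₗ ℤ ≃o ℚ ×ₗ ℤ :=
  (sumLexProdLexDistrib ℚ ℚ ℤ).symm.trans (prodLexIntOfCountableDense _)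

noncomputable def ratProdLexIntSumLexIntSumLexSelf :
    ℚ ×ₗ ℤ ⊕ₗ (ℤ ⊕ₗ ℚ ×ₗ ℤ) ≃o ℚ ×ₗ ℤ :=
  (sumLexCongr (.refl _) punitSumLexProdLex.{0, 0, 0}.symm).trans <|
    (sumLexProdLexDistrib _ _ ℤ).symm.trans (prodLexIntOfCountableDense _)

end ZetaEta

end OrderIso

namespace EFGames

open OrderIso

noncomputable def natDualSumLexNatSumLex : ℕᵒᵈ ⊕ₗ (ℕ ⊕ₗ ℚ ×ₗ ℤ) ≃o ℤ ⊕ₗ ℚ ×ₗ ℤ :=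
  (sumLexAssoc _ _ _).symm.trans (sumLexCongr natDualSumLexNat (.refl _))

noncomputable def natProdLexRho : ℕ ×ₗ Rho ≃o ℕ ⊕ₗ ℚ ×ₗ ℤ :=
  (prodLexCongr (.refl ℕ) (sumLexAssoc _ _ _)).trans <| natProdLexSumLexRotate.trans <|
    sumLexCongr (.refl ℕ) <|
      (prodLexCongr (.refl ℕ) <| (sumLexAssoc _ _ _).trans <|
        sumLexCongr (.refl _) natDualSumLexNat).trans (prodLexSumLexIntOfNoMaxOrder ℕ)

noncomputable def intProdLexRho : ℤ ×ₗ Rho ≃o ℚ ×ₗ ℤ :=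
  intProdLexSumLexRotate.trans <|
    (prodLexCongr (.refl ℤ) natDualSumLexNatSumLex).trans (prodLexIntSumLexOfNoMinOrder ℤ)

noncomputable def ratProdLexIntProdLexRho : (ℚ ×ₗ ℤ) ×ₗ Rho ≃o ℚ ×ₗ ℤ :=
  (prodLexAssoc _ _ _).trans <|
    (prodLexCongr (.refl ℚ) intProdLexRho).trans (prodLexRatProdLexInt ℚ)

noncomputable def natDualProdLexRho : ℕᵒᵈ ×ₗ Rho ≃o ℚ ×ₗ ℤ ⊕ₗ ℕᵒᵈ :=
  natDualProdLexSumLexRotate.trans <| sumLexCongr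
    ((prodLexCongr (.refl ℕᵒᵈ) natDualSumLexNatSumLex).trans (prodLexIntSumLexOfNoMinOrder ℕᵒᵈ))
    (.refl ℕᵒᵈ)

noncomputable def rhoProdLexRho : Rho ×ₗ Rho ≃o Rho :=
  let pieces : Rho ×ₗ Rho ≃o ((ℕ ⊕ₗ ℚ ×ₗ ℤ) ⊕ₗ ℚ ×ₗ ℤ) ⊕ₗ (ℚ ×ₗ ℤ ⊕ₗ ℕᵒᵈ) :=
    (sumLexProdLexDistrib _ _ _).trans <| sumLexCongr
      ((sumLexProdLexDistrib _ _ _).trans (sumLexCongr natProdLexRho ratProdLexIntProdLexRho))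
      natDualProdLexRho
  let regroup : ((ℕ ⊕ₗ ℚ ×ₗ ℤ) ⊕ₗ ℚ ×ₗ ℤ) ⊕ₗ (ℚ ×ₗ ℤ ⊕ₗ ℕᵒᵈ) ≃o
      (ℕ ⊕ₗ ((ℚ ×ₗ ℤ ⊕ₗ ℚ ×ₗ ℤ) ⊕ₗ ℚ ×ₗ ℤ)) ⊕ₗ ℕᵒᵈ :=
    (sumLexAssoc _ _ _).symm.trans <| sumLexCongr
      ((sumLexCongr (sumLexAssoc _ _ _) (.refl _)).trans (sumLexAssoc _ _ _)) (.refl ℕᵒᵈ)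
  pieces.trans <| regroup.trans <| sumLexCongr
    (sumLexCongr (.refl ℕ) <|
      (sumLexCongr ratProdLexIntSumLexSelf (.refl _)).trans ratProdLexIntSumLexSelf)
    (.refl ℕᵒᵈ)

noncomputable def rhoSumLexRho : Rho ⊕ₗ Rho ≃o Rho :=
  let merge : Rho ⊕ₗ Rho ≃o (ℕ ⊕ₗ ℚ ×ₗ ℤ) ⊕ₗ ((ℤ ⊕ₗ ℚ ×ₗ ℤ) ⊕ₗ ℕᵒᵈ) :=
    (sumLexAssoc _ _ _).trans <| sumLexCongr (.refl _) <|
      (sumLexAssoc _ _ _).symm.trans (sumLexCongr natDualSumLexNatSumLex (.refl ℕᵒᵈ))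
  let regroup : (ℕ ⊕ₗ ℚ ×ₗ ℤ) ⊕ₗ ((ℤ ⊕ₗ ℚ ×ₗ ℤ) ⊕ₗ ℕᵒᵈ) ≃o
      (ℕ ⊕ₗ (ℚ ×ₗ ℤ ⊕ₗ (ℤ ⊕ₗ ℚ ×ₗ ℤ))) ⊕ₗ ℕᵒᵈ :=
    (sumLexAssoc _ _ _).symm.trans (sumLexCongr (sumLexAssoc _ _ _) (.refl ℕᵒᵈ))
  merge.trans <| regroup.trans <|
    sumLexCongr (sumLexCongr (.refl ℕ) ratProdLexIntSumLexIntSumLexSelf) (.refl ℕᵒᵈ)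

noncomputable def rhoSumLexPUnit : Rho ⊕ₗ PUnit ≃o Rho :=
  (sumLexAssoc _ _ _).trans (sumLexCongr (.refl _) natDualSumLexPUnit)

noncomputable def punitSumLexRho : PUnit ⊕ₗ Rho ≃o Rho :=
  (sumLexAssoc _ _ _).symm.trans <| sumLexCongr
    ((sumLexAssoc _ _ _).symm.trans (sumLexCongr punitSumLexNat (.refl _))) (.refl ℕᵒᵈ)

/-- identities of the order type `ρ`: `ρ·ρ = ρ`, `ρ + ρ = ρ`,
`n·ρ = ρ` for `n ≥ 1`, and `ρ + 1 = 1 + ρ = ρ`, stated as order isomorphisms of the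
corresponding lexicographic products and ordered sums with a linear order `Rho` of
order type `ρ` (since both factors of the product equal `Rho`, the lexicographic
product represents `ρ·ρ`). -/
theorem statement_19 :
    Nonempty ((Rho ×ₗ Rho) ≃o Rho) ∧
    Nonempty ((Rho ⊕ₗ Rho) ≃o Rho) ∧
    (∀ n : ℕ, 1 ≤ n → Nonempty ((Fin n ×ₗ Rho) ≃o Rho)) ∧
    Nonempty ((Rho ⊕ₗ PUnit) ≃o Rho) ∧
    Nonempty ((PUnit ⊕ₗ Rho) ≃o Rho) := by
  refine ⟨⟨rhoProdLexRho⟩, ⟨rhoSumLexRho⟩, fun n hn => ?_, ⟨rhoSumLexPUnit⟩, ⟨punitSumLexRho⟩⟩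
  obtain ⟨n, rfl⟩ := Nat.exists_eq_add_of_le' hn
  exact ⟨finSuccProdLexOfSumLexSelf rhoSumLexRho n⟩

end EFGames
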